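/- arXiv:1710.07599 — 5 statements merged into one kernel-verified Lean document; each statement's English description precedes it below -/
import Mathlib

section
/- If (A, μ) is an associative algebra and α : A → A is an algebra morphism (i.e., α(μ(x,y)) = μ(α(x),α(y))), then (A, μ_α, α) with μ_α = α ∘ μ is a Hom-associative algebra, i.e., μ_α(α(x), μ_α(y,z)) = μ_α(μ_α(x,y), α(z)) for all x, y, z ∈ A. -/
/-- If `(A, μ)` is an associative algebra and `α : A → A` is an algebra
morphism, then `(A, μ_α, α)` with `μ_α = α ∘ μ` is a Hom-associative algebra. -/
theorem yau_twist_hom_associative {K A : Type*} [Field K] [AddCommGroup A] [Module K A]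
    (μ : A →ₗ[K] A →ₗ[K] A) (α : A →ₗ[K] A)
    (hassoc : ∀ x y z : A, μ (μ x y) z = μ x (μ y z))
    (hα : ∀ x y : A, α (μ x y) = μ (α x) (α y)) :
    ∀ x y z : A, α (μ (α x) (α (μ y z))) = α (μ (α (μ x y)) (α z)) := by
  intro x y z
  simp only [hα, hassoc]
end

section
/- Let (A, μ, α) be a multiplicative Hom-associative algebra, M a vector space with linear map α' : M → M carrying an A-bimodule structure via left action ρ_l and right action ρ_r. Define for an n-cochain φ (an n-linear map A^n → M with α' ∘ φ = φ ∘ α^⊗n) the coboundary δⁿφ(x₀,…,xₙ) = ρ_l(α^{n−1}(x₀), φ(x₁,…,xₙ)) + Σ_{k=1}^{n} (−1)^k φ(α(x₀),…,α(x_{k−2}), μ(x_{k−1},x_k), α(x_{k+1}),…,α(xₙ)) + (−1)^{n+1} ρ_r(φ(x₀,…,x_{n−1}), α^{n−1}(xₙ)). Then δ^{n+1} ∘ δⁿ = 0. -/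
/-- The Hom-type Hochschild coboundary operator on `M`-valued cochains of a
Hom-associative algebra `(A, μ, α)`, where `M` carries left/right actions
`ρl`, `ρr`. Here the parameter `m` means the operator sends `(m+1)`-cochains
to `(m+2)`-cochains (so `n = m+1 ≥ 1`). -/
def homDel {A M : Type*} [AddCommGroup M] (μ : A → A → A) (α : A → A)
    (ρl : A → M → M) (ρr : M → A → M) (m : ℕ)
    (f : (Fin (m + 1) → A) → M) : (Fin (m + 2) → A) → M := fun x =>
  ρl (α^[m] (x 0)) (f (fun i => x i.succ))
    + (∑ k ∈ Finset.Icc 1 (m + 1), ((-1 : ℤ) ^ k) •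
        f (fun i : Fin (m + 1) =>
            if (i : ℕ) + 1 < k then α (x i.castSucc)
            else if (i : ℕ) + 1 = k then μ (x i.castSucc) (x i.succ)
            else α (x i.succ)))
    + ((-1 : ℤ) ^ (m + 2)) • ρr (f (fun i => x i.castSucc)) (α^[m] (x (Fin.last (m + 1))))

section NatDev

variable {K A M : Type*} [Field K] [AddCommGroup A] [Module K A]
  [AddCommGroup M] [Module K M]
variable (μ : A →ₗ[K] A →ₗ[K] A) (α : A →ₗ[K] A)
  (ρl : A → M →ₗ[K] M) (ρr : A → M →ₗ[K] M)

def shiftSeq (x : ℕ → A) : ℕ → A := fun i => x (i + 1)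

def faceSeq (k : ℕ) (x : ℕ → A) : ℕ → A := fun i =>
  if i + 1 < k then α (x i)
  else if i + 1 = k then μ (x i) (x (i + 1))
  else α (x (i + 1))

def nD (p k : ℕ) (G : (ℕ → A) → M) (x : ℕ → A) : M :=
  if k = 0 then ρl ((⇑α)^[p] (x 0)) (G (shiftSeq x))
  else if k = p + 2 then ρr ((⇑α)^[p] (x (p + 1))) (G x)
  else G (faceSeq μ α k x)

def nDel (p : ℕ) (G : (ℕ → A) → M) : (ℕ → A) → M := fun x =>
  ∑ k ∈ Finset.range (p + 3), ((-1 : ℤ) ^ k) • nD μ α ρl ρr p k G x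

lemma nD_zero (p : ℕ) (G : (ℕ → A) → M) (x : ℕ → A) :
    nD μ α ρl ρr p 0 G x = ρl ((⇑α)^[p] (x 0)) (G (shiftSeq x)) := by
  rw [nD, if_pos rfl]

lemma nD_last (p k : ℕ) (hk : k = p + 2) (G : (ℕ → A) → M) (x : ℕ → A) :
    nD μ α ρl ρr p k G x = ρr ((⇑α)^[p] (x (p + 1))) (G x) := by
  subst hk; rw [nD, if_neg (by omega), if_pos rfl]

lemma nD_mid (p k : ℕ) (h1 : k ≠ 0) (h2 : k ≠ p + 2) (G : (ℕ → A) → M) (x : ℕ → A) :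
    nD μ α ρl ρr p k G x = G (faceSeq μ α k x) := by
  rw [nD, if_neg h1, if_neg h2]

lemma nDel_apply (p : ℕ) (G : (ℕ → A) → M) (x : ℕ → A) :
    nDel μ α ρl ρr p G x =
      ρl ((⇑α)^[p] (x 0)) (G (shiftSeq x))
        + (∑ k ∈ Finset.Icc 1 (p + 1), ((-1 : ℤ) ^ k) • G (faceSeq μ α k x))
        + ((-1 : ℤ) ^ (p + 2)) • ρr ((⇑α)^[p] (x (p + 1))) (G x) := by
  rw [nDel]
  rw [Finset.sum_range_succ, Finset.sum_range_succ']
  rw [nD_zero, nD_last μ α ρl ρr p (p+2) rfl]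
  rw [← Finset.Ico_add_one_right_eq_Icc, Finset.sum_Ico_eq_sum_range]
  simp only [pow_zero, one_smul, show p + 1 + 1 - 1 = p + 1 from rfl]
  have hmid : ∑ k ∈ Finset.range (p + 1), ((-1 : ℤ)) ^ (k + 1) • nD μ α ρl ρr p (k + 1) G x
      = ∑ i ∈ Finset.range (p + 1), ((-1 : ℤ)) ^ (1 + i) • G (faceSeq μ α (1 + i) x) := by
    refine Finset.sum_congr rfl ?_
    intro i hi
    rw [Finset.mem_range] at hi
    rw [nD_mid μ α ρl ρr p (i + 1) (by omega) (by omega), show 1 + i = i + 1 by omega]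
  rw [hmid]
  abel

lemma nD_sum {ι : Type*} (p k : ℕ) (s : Finset ι) (c : ι → ℤ) (H : ι → (ℕ → A) → M)
    (x : ℕ → A) :
    nD μ α ρl ρr p k (fun y => ∑ j ∈ s, c j • H j y) x
      = ∑ j ∈ s, c j • nD μ α ρl ρr p k (H j) x := by
  rw [nD]
  split_ifs with h1 h2
  · subst h1
    simp only [nD_zero, map_sum, map_zsmul]
  · subst h2
    simp only [nD_last μ α ρl ρr p _ rfl, map_sum, map_zsmul]
  · simp only [nD_mid μ α ρl ρr p k h1 h2]

lemma it_mul (hmult : ∀ x y : A, α (μ x y) = μ (α x) (α y)) (k : ℕ) (a b : A) :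
    (⇑α)^[k] (μ a b) = μ ((⇑α)^[k] a) ((⇑α)^[k] b) := by
  induction k with
  | zero => rfl
  | succ k ih => simp only [Function.iterate_succ_apply', ih, hmult]


lemma keyId (α' : M →ₗ[K] M)
    (hassoc : ∀ x y z : A, μ (α x) (μ y z) = μ (μ x y) (α z))
    (hmult : ∀ x y : A, α (μ x y) = μ (α x) (α y))
    (hl : ∀ (x y : A) (v : M), ρl (μ x y) (α' v) = ρl (α x) (ρl y v))
    (hr : ∀ (x y : A) (v : M), ρr (α y) (ρr x v) = ρr (μ x y) (α' v))
    (hlr : ∀ (x z : A) (v : M), ρr (α z) (ρl x v) = ρl (α x) (ρr z v))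
    (p i j : ℕ) (hij : i ≤ j) (hj : j ≤ p + 2)
    (G : (ℕ → A) → M)
    (hGdep : ∀ y z : ℕ → A, (∀ t, t < p + 1 → y t = z t) → G y = G z)
    (hGc : ∀ y : ℕ → A, α' (G y) = G (fun t => α (y t)))
    (x : ℕ → A) :
    nD μ α ρl ρr (p + 1) i (nD μ α ρl ρr p j G) x
      = nD μ α ρl ρr (p + 1) (j + 1) (nD μ α ρl ρr p i G) x := by
  by_cases hi0 : i = 0
  · subst hi0
    by_cases hj0 : j = 0
    · -- case i = j = 0
      subst hj0
      rw [nD_zero, nD_mid μ α ρl ρr (p+1) 1 (by omega) (by omega), nD_zero, nD_zero]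
      have e1 : faceSeq μ α 1 x 0 = μ (x 0) (x 1) := by
        simp only [faceSeq]
        split_ifs <;> first | rfl | omega
      have e2 : shiftSeq (faceSeq μ α 1 x) = fun t => α (shiftSeq (shiftSeq x) t) := by
        funext t
        simp only [shiftSeq, faceSeq]
        split_ifs <;> first | rfl | omega
      rw [e1, e2, ← hGc, it_mul μ α hmult, hl]
      simp only [Function.iterate_succ_apply']
      rfl
    · by_cases hjl : j = p + 2
      · -- case i = 0, j = p + 2
        subst hjl
        rw [nD_zero, nD_last μ α ρl ρr p (p+2) rfl,
          nD_last μ α ρl ρr (p+1) (p+2+1) (by omega), nD_zero]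
        simp only [Function.iterate_succ_apply']
        exact (hlr _ _ _).symm
      · -- case i = 0, 1 ≤ j ≤ p + 1
        rw [nD_zero, nD_mid μ α ρl ρr p j hj0 hjl,
          nD_mid μ α ρl ρr (p+1) (j+1) (by omega) (by omega), nD_zero]
        have e1 : faceSeq μ α (j+1) x 0 = α (x 0) := by
          simp only [faceSeq]
          split_ifs <;> first | rfl | omega
        have e2 : shiftSeq (faceSeq μ α (j+1) x) = faceSeq μ α j (shiftSeq x) := by
          funext t
          simp only [shiftSeq, faceSeq]
          split_ifs <;> first | rfl | omega
        rw [e1, e2, ← Function.iterate_succ_apply]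
  · by_cases hjl : j = p + 2
    · subst hjl
      by_cases hil : i = p + 2
      · -- case i = j = p + 2
        subst hil
        rw [nD_mid μ α ρl ρr (p+1) (p+2) (by omega) (by omega),
          nD_last μ α ρl ρr p (p+2) rfl,
          nD_last μ α ρl ρr (p+1) (p+2+1) (by omega),
          nD_last μ α ρl ρr p (p+2) rfl]
        have e1 : faceSeq μ α (p+2) x (p+1) = μ (x (p+1)) (x (p+1+1)) := by
          simp only [faceSeq]
          split_ifs <;> first | rfl | omega
        have e2 : G (faceSeq μ α (p+2) x) = G (fun t => α (x t)) := by
          refine hGdep _ _ ?_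
          intro t ht
          simp only [faceSeq]
          split_ifs <;> first | rfl | omega
        rw [e1, e2, ← hGc, it_mul μ α hmult]
        simp only [Function.iterate_succ_apply']
        rw [hr]
      · -- case 1 ≤ i ≤ p + 1, j = p + 2
        rw [nD_mid μ α ρl ρr (p+1) i hi0 (by omega),
          nD_last μ α ρl ρr p (p+2) rfl,
          nD_last μ α ρl ρr (p+1) (p+2+1) (by omega),
          nD_mid μ α ρl ρr p i hi0 hil]
        have e1 : faceSeq μ α i x (p+1) = α (x (p+1+1)) := by
          simp only [faceSeq]
          split_ifs <;> first | rfl | omega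
        rw [e1, ← Function.iterate_succ_apply]
    · -- case 1 ≤ i ≤ j ≤ p + 1
      rw [nD_mid μ α ρl ρr (p+1) i hi0 (by omega),
        nD_mid μ α ρl ρr p j (by omega) hjl,
        nD_mid μ α ρl ρr (p+1) (j+1) (by omega) (by omega),
        nD_mid μ α ρl ρr p i hi0 (by omega)]
      congr 1
      funext t
      simp only [faceSeq]
      split_ifs <;>
        first
          | rfl
          | omega
          | exact hassoc _ _ _
          | exact (hassoc _ _ _).symm
          | exact hmult _ _
          | exact (hmult _ _).symm


lemma cancelSum {M : Type*} [AddCommGroup M] (N : ℕ) (T : ℕ → ℕ → M)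
    (h : ∀ i j, i ≤ j → j ≤ N → T i j = T (j + 1) i) :
    ∑ i ∈ Finset.range (N + 2), ∑ j ∈ Finset.range (N + 1),
      ((-1 : ℤ) ^ (i + j)) • T i j = 0 := by
  rw [← Finset.sum_product']
  rw [← Finset.sum_filter_add_sum_filter_not
    ((Finset.range (N + 2)) ×ˢ (Finset.range (N + 1))) (fun p => p.1 ≤ p.2)]
  have hkey : ∑ q ∈ ((Finset.range (N + 2)) ×ˢ (Finset.range (N + 1))).filter
        (fun q => ¬ q.1 ≤ q.2), ((-1 : ℤ) ^ (q.1 + q.2)) • T q.1 q.2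
      = ∑ q ∈ ((Finset.range (N + 2)) ×ˢ (Finset.range (N + 1))).filter
        (fun q => q.1 ≤ q.2), (-(((-1 : ℤ) ^ (q.1 + q.2)) • T q.1 q.2)) := by
    refine Finset.sum_nbij' (fun q => (q.2, q.1 - 1)) (fun q => (q.2 + 1, q.1)) ?_ ?_ ?_ ?_ ?_
    · intro a ha
      simp only [Finset.mem_filter, Finset.mem_product, Finset.mem_range] at ha ⊢
      omega
    · intro a ha
      simp only [Finset.mem_filter, Finset.mem_product, Finset.mem_range] at ha ⊢
      omega
    · intro a ha
      simp only [Finset.mem_filter, Finset.mem_product, Finset.mem_range] at ha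
      simp [Prod.ext_iff] <;> omega
    · intro a ha
      simp only [Finset.mem_filter, Finset.mem_product, Finset.mem_range] at ha
      simp [Prod.ext_iff] <;> omega
    · intro a ha
      simp only [Finset.mem_filter, Finset.mem_product, Finset.mem_range] at ha
      have h1 : T a.2 (a.1 - 1) = T a.1 a.2 := by
        have := h a.2 (a.1 - 1) (by omega) (by omega)
        rw [this, show a.1 - 1 + 1 = a.1 by omega]
      have h2 : a.1 + a.2 = (a.2 + (a.1 - 1)) + 1 := by omega
      rw [h1, h2, pow_succ, mul_neg_one, neg_smul]
  rw [hkey, Finset.sum_neg_distrib, add_neg_cancel]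

lemma delsq (α' : M →ₗ[K] M)
    (hassoc : ∀ x y z : A, μ (α x) (μ y z) = μ (μ x y) (α z))
    (hmult : ∀ x y : A, α (μ x y) = μ (α x) (α y))
    (hl : ∀ (x y : A) (v : M), ρl (μ x y) (α' v) = ρl (α x) (ρl y v))
    (hr : ∀ (x y : A) (v : M), ρr (α y) (ρr x v) = ρr (μ x y) (α' v))
    (hlr : ∀ (x z : A) (v : M), ρr (α z) (ρl x v) = ρl (α x) (ρr z v))
    (m : ℕ) (G : (ℕ → A) → M)
    (hGdep : ∀ y z : ℕ → A, (∀ t, t < m + 1 → y t = z t) → G y = G z)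
    (hGc : ∀ y : ℕ → A, α' (G y) = G (fun t => α (y t)))
    (x : ℕ → A) :
    nDel μ α ρl ρr (m + 1) (nDel μ α ρl ρr m G) x = 0 := by
  have step1 : nDel μ α ρl ρr (m + 1) (nDel μ α ρl ρr m G) x
      = ∑ i ∈ Finset.range (m + 4), ∑ j ∈ Finset.range (m + 3),
          ((-1 : ℤ) ^ (i + j)) • nD μ α ρl ρr (m + 1) i (nD μ α ρl ρr m j G) x := by
    rw [nDel]
    refine Finset.sum_congr rfl ?_
    intro i _
    have : nD μ α ρl ρr (m + 1) i (nDel μ α ρl ρr m G) x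
        = ∑ j ∈ Finset.range (m + 3), ((-1 : ℤ) ^ j) •
            nD μ α ρl ρr (m + 1) i (nD μ α ρl ρr m j G) x :=
      nD_sum μ α ρl ρr (m + 1) i (Finset.range (m + 3)) _ _ x
    rw [this, Finset.smul_sum]
    refine Finset.sum_congr rfl ?_
    intro j _
    rw [smul_smul, ← pow_add]
  rw [step1]
  exact cancelSum (m + 2) _ (fun i j hij hj =>
    keyId μ α ρl ρr α' hassoc hmult hl hr hlr m i j hij hj G hGdep hGc x)


lemma transfer (q : ℕ) (g : (Fin (q + 1) → A) → M) (Gg : (ℕ → A) → M)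
    (hg : ∀ y : ℕ → A, Gg y = g (fun i => y i))
    (y : ℕ → A) (Y : Fin (q + 2) → A) (hy : ∀ i : Fin (q + 2), y i = Y i) :
    homDel (fun a b => μ a b) (fun a => α a) (fun a v => ρl a v) (fun v a => ρr a v) q g Y
      = nDel μ α ρl ρr q Gg y := by
  have hαfun : (fun a => α a) = ⇑α := rfl
  have e0 : y 0 = Y 0 := by simpa using hy 0
  have e1 : Gg (shiftSeq y) = g (fun i : Fin (q + 1) => Y i.succ) := by
    rw [hg]
    congr 1
    funext i
    simpa [shiftSeq] using hy i.succ
  have e2 : ∀ k : ℕ, Gg (faceSeq μ α k y) = g (fun i : Fin (q + 1) =>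
      if (i : ℕ) + 1 < k then α (Y i.castSucc)
      else if (i : ℕ) + 1 = k then μ (Y i.castSucc) (Y i.succ)
      else α (Y i.succ)) := by
    intro k
    rw [hg]
    congr 1
    funext i
    have h1 : y (i : ℕ) = Y i.castSucc := by simpa using hy i.castSucc
    have h2 : y ((i : ℕ) + 1) = Y i.succ := by simpa using hy i.succ
    simp only [faceSeq, h1, h2]
  have e3 : Gg y = g (fun i : Fin (q + 1) => Y i.castSucc) := by
    rw [hg]
    congr 1
    funext i
    simpa using hy i.castSucc
  have e4 : y (q + 1) = Y (Fin.last (q + 1)) := by simpa using hy (Fin.last (q + 1))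
  have emid : ∑ k ∈ Finset.Icc 1 (q + 1), ((-1 : ℤ) ^ k) • Gg (faceSeq μ α k y)
      = ∑ k ∈ Finset.Icc 1 (q + 1), ((-1 : ℤ) ^ k) • g (fun i : Fin (q + 1) =>
          if (i : ℕ) + 1 < k then α (Y i.castSucc)
          else if (i : ℕ) + 1 = k then μ (Y i.castSucc) (Y i.succ)
          else α (Y i.succ)) :=
    Finset.sum_congr rfl (fun k _ => by rw [e2 k])
  simp only [homDel]
  rw [nDel_apply, e0, e1, emid, e3, e4, hαfun]

end NatDev

/-- for a multiplicative Hom-associative algebra `A` and an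
`A`-bimodule `(M, α', ρl, ρr)`, the Hom-Hochschild coboundary satisfies
`δ^{n+1} ∘ δⁿ = 0`. -/
theorem homDel_homDel_eq_zero {K A M : Type*} [Field K]
    [AddCommGroup A] [Module K A] [AddCommGroup M] [Module K M]
    (μ : A →ₗ[K] A →ₗ[K] A) (α : A →ₗ[K] A) (α' : M →ₗ[K] M)
    (ρl : A → M →ₗ[K] M) (ρr : A → M →ₗ[K] M)
    (hassoc : ∀ x y z : A, μ (α x) (μ y z) = μ (μ x y) (α z))
    (hmult : ∀ x y : A, α (μ x y) = μ (α x) (α y))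
    (hl : ∀ (x y : A) (v : M), ρl (μ x y) (α' v) = ρl (α x) (ρl y v))
    (hr : ∀ (x y : A) (v : M), ρr (α y) (ρr x v) = ρr (μ x y) (α' v))
    (hlr : ∀ (x z : A) (v : M), ρr (α z) (ρl x v) = ρl (α x) (ρr z v))
    (hlα : ∀ (x : A) (v : M), ρl (α x) (α' v) = α' (ρl x v))
    (hrα : ∀ (x : A) (v : M), ρr (α x) (α' v) = α' (ρr x v))
    (m : ℕ) (f : MultilinearMap K (fun _ : Fin (m + 1) => A) M)
    (hcompat : ∀ x : Fin (m + 1) → A, α' (f x) = f (fun i => α (x i))) :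
    ∀ x : Fin (m + 3) → A,
      homDel (fun a b => μ a b) (fun a => α a) (fun a v => ρl a v) (fun v a => ρr a v)
        (m + 1)
        (homDel (fun a b => μ a b) (fun a => α a) (fun a v => ρl a v) (fun v a => ρr a v)
          m (⇑f)) x = 0 := by
  intro x
  set G : (ℕ → A) → M := fun y => f (fun i : Fin (m + 1) => y i) with hGdef
  have hGdep : ∀ y z : ℕ → A, (∀ t, t < m + 1 → y t = z t) → G y = G z :=
    fun y z hz => congrArg (⇑f) (funext fun i => hz i i.isLt)
  have hGc : ∀ y : ℕ → A, α' (G y) = G (fun t => α (y t)) :=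
    fun y => hcompat (fun i => y i)
  have hinner : ∀ y : ℕ → A,
      homDel (fun a b => μ a b) (fun a => α a) (fun a v => ρl a v) (fun v a => ρr a v)
        m (⇑f) (fun i : Fin (m + 2) => y i) = nDel μ α ρl ρr m G y :=
    fun y => transfer μ α ρl ρr m (⇑f) G (fun z => rfl) y (fun i => y i) (fun i => rfl)
  have houter := transfer μ α ρl ρr (m + 1)
    (homDel (fun a b => μ a b) (fun a => α a) (fun a v => ρl a v) (fun v a => ρr a v) m (⇑f))
    (nDel μ α ρl ρr m G) (fun y => (hinner y).symm)
    (fun t => if h : t < m + 3 then x ⟨t, h⟩ else 0) x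
    (fun i => by simp [i.isLt])
  rw [houter]
  exact delsq μ α ρl ρr α' hassoc hmult hl hr hlr m G hGdep hGc _
end

section
/- Let (A, μ, α) and (A', μ', α') be multiplicative Hom-associative algebras and φ : A → A' a Hom-associative algebra morphism. The coboundary operator δⁿψ(x₀,…,xₙ) = μ'(φ(α^{n−1}(x₀)), ψ(x₁,…,xₙ)) + Σ_{k=1}^{n}(−1)^k ψ(α(x₀),…, μ(x_{k−1},x_k), …, α(xₙ)) + (−1)^{n+1} μ'(ψ(x₀,…,x_{n−1}), φ(α^{n−1}(xₙ))) on n-cochains A^n → A' compatible with (α, α') satisfies δ^{n+1} ∘ δⁿ = 0 for all n ≥ 1. -/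
def dface {A : Type*} (μ : A → A → A) (α : A → A) (k : ℕ) {n : ℕ}
    (x : Fin (n + 1) → A) : Fin n → A := fun i =>
  if (i : ℕ) + 1 < k then α (x i.castSucc)
  else if (i : ℕ) + 1 = k then μ (x i.castSucc) (x i.succ)
  else α (x i.succ)

def Tterm {A A' : Type*} (μ : A → A → A) (α : A → A)
    (μ' : A' → A' → A') (φ : A → A') (m : ℕ)
    (f : (Fin (m + 1) → A) → A') (k : ℕ) (y : Fin (m + 2) → A) : A' :=
  if k = 0 then μ' (φ (α^[m] (y 0))) (f (fun i => y i.succ))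
  else if k ≤ m + 1 then f (dface μ α k y)
  else μ' (f (fun i => y i.castSucc)) (φ (α^[m] (y (Fin.last (m + 1)))))

def Uterm {A A' : Type*} (μ : A → A → A) (α : A → A)
    (μ' : A' → A' → A') (φ : A → A') (m : ℕ)
    (f : (Fin (m + 1) → A) → A') (x : Fin (m + 3) → A) (j k : ℕ) : A' :=
  if j = 0 then μ' (φ (α^[m+1] (x 0))) (Tterm μ α μ' φ m f k (fun i => x i.succ))
  else if j ≤ m + 2 then Tterm μ α μ' φ m f k (dface μ α j x)
  else μ' (Tterm μ α μ' φ m f k (fun i => x i.castSucc)) (φ (α^[m+1] (x (Fin.last (m + 2)))))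

lemma dface_comm {A : Type*} (μ : A → A → A) (α : A → A)
    (hA : ∀ x y z : A, μ (α x) (μ y z) = μ (μ x y) (α z))
    (hmult : ∀ x y : A, α (μ x y) = μ (α x) (α y))
    {n : ℕ} (j k : ℕ) (hj : 1 ≤ j) (hjk : j ≤ k) (hk : k ≤ n)
    (x : Fin (n + 2) → A) :
    dface μ α k (dface μ α j x) = dface μ α j (dface μ α (k + 1) x) := by
  funext i
  simp only [dface, Fin.coe_castSucc, Fin.val_succ, Fin.succ_castSucc]
  split_ifs <;> first | rfl | omega | rw [hmult] | rw [hA]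

lemma iter_mul {A : Type*} (μ : A → A → A) (α : A → A)
    (hmult : ∀ x y : A, α (μ x y) = μ (α x) (α y))
    (m : ℕ) (a b : A) : α^[m] (μ a b) = μ (α^[m] a) (α^[m] b) := by
  induction m with
  | zero => rfl
  | succ p ih =>
    rw [Function.iterate_succ_apply' α p, Function.iterate_succ_apply' α p,
      Function.iterate_succ_apply' α p, ih, hmult]

lemma Uterm_pair {A A' : Type*} (μ : A → A → A) (α : A → A)
    (μ' : A' → A' → A') (α' : A' → A') (φ : A → A')
    (hA : ∀ x y z : A, μ (α x) (μ y z) = μ (μ x y) (α z))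
    (hA' : ∀ x y z : A', μ' (α' x) (μ' y z) = μ' (μ' x y) (α' z))
    (hmult : ∀ x y : A, α (μ x y) = μ (α x) (α y))
    (hφμ : ∀ x y : A, φ (μ x y) = μ' (φ x) (φ y))
    (hφα : ∀ x : A, φ (α x) = α' (φ x))
    (m : ℕ) (f : (Fin (m + 1) → A) → A')
    (hcompat : ∀ y : Fin (m + 1) → A, α' (f y) = f (fun i => α (y i)))
    (x : Fin (m + 3) → A) (j k : ℕ) (hjk : j ≤ k) (hk : k ≤ m + 2) :
    Uterm μ α μ' φ m f x j k = Uterm μ α μ' φ m f x (k + 1) j := by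
  have it1 : ∀ a : A, α^[m] (α a) = α^[m + 1] a := fun a =>
    (Function.iterate_succ_apply α m a).symm
  have it2 : ∀ a : A, φ (α^[m + 1] a) = α' (φ (α^[m] a)) := by
    intro a; rw [Function.iterate_succ_apply' α m a, hφα]
  have itμ : ∀ a b : A, α^[m] (μ a b) = μ (α^[m] a) (α^[m] b) := iter_mul μ α hmult m
  by_cases hj0 : j = 0
  · subst hj0
    rw [Uterm, if_pos rfl]
    by_cases hk0 : k = 0
    · -- case 1
      subst hk0
      rw [Uterm, if_neg (Nat.succ_ne_zero 0), if_pos (by omega),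
        Tterm, if_pos rfl, Tterm, if_pos rfl]
      have h0 : dface μ α (0 + 1) x 0 = μ (x 0) (x (Fin.succ 0)) := by
        simp [dface]
      have htail : (fun i : Fin (m + 1) => dface μ α (0 + 1) x i.succ)
          = fun i : Fin (m + 1) => α (x i.succ.succ) := by
        funext i; simp [dface]
      rw [h0, htail, itμ, hφμ,
        show f (fun i : Fin (m + 1) => α (x i.succ.succ)) = α' (f fun i => x i.succ.succ)
          from (hcompat _).symm, it2, hA']
    · by_cases hktop : k = m + 2
      · -- case 3
        subst hktop
        rw [Uterm, if_neg (by omega), if_neg (by omega),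
          Tterm, if_neg (by omega), if_neg (by omega), Tterm, if_pos rfl]
        simp only [Fin.succ_castSucc, Fin.castSucc_zero, Fin.succ_last]
        rw [it2, it2, hA']
      · -- case 2
        rw [Uterm, if_neg (by omega), if_pos (by omega), Tterm, if_neg hk0,
          if_pos (by omega), Tterm, if_pos rfl]
        have h0 : dface μ α (k + 1) x 0 = α (x 0) := by
          simp only [dface, Fin.val_zero]
          simp only [show (0:ℕ) + 1 < k + 1 by omega, ↓reduceIte]
          simp
        have htail : (fun i : Fin (m + 1) => dface μ α (k + 1) x i.succ)
            = dface μ α k (fun i : Fin (m + 2) => x i.succ) := by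
          funext i
          simp only [dface, Fin.val_succ, Fin.coe_castSucc, Fin.succ_castSucc]
          split_ifs <;> first | rfl | omega
        rw [h0, htail, it1]
  · have hj1 : 1 ≤ j := by omega
    by_cases hktop : k = m + 2
    · subst hktop
      by_cases hjtop : j = m + 2
      · -- case 7
        subst hjtop
        rw [Uterm, if_neg hj0, if_pos le_rfl, Tterm, if_neg (by omega), if_neg (by omega),
          Uterm, if_neg (by omega), if_neg (by omega), Tterm, if_neg (by omega),
          if_neg (by omega)]
        have hlast7 : dface μ α (m + 2) x (Fin.last (m + 1))
            = μ (x (Fin.last (m + 1)).castSucc) (x (Fin.last (m + 1)).succ) := by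
          simp [dface]
        have hinit7 : (fun i : Fin (m + 1) => dface μ α (m + 2) x i.castSucc)
            = fun i : Fin (m + 1) => α (x i.castSucc.castSucc) := by
          funext i
          simp only [dface, Fin.coe_castSucc]
          rw [if_pos (by have := i.isLt; omega)]
        rw [hlast7, hinit7, itμ, hφμ,
          show f (fun i : Fin (m + 1) => α (x i.castSucc.castSucc))
              = α' (f fun i => x i.castSucc.castSucc) from (hcompat _).symm,
          it2, Fin.succ_last, hA']
      · -- case 6
        rw [Uterm, if_neg hj0, if_pos (by omega), Tterm, if_neg (by omega), if_neg (by omega),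
          Uterm, if_neg (by omega), if_neg (by omega), Tterm, if_neg hj0, if_pos (by omega)]
        have hlast : dface μ α j x (Fin.last (m + 1)) = α (x (Fin.last (m + 2))) := by
          simp only [dface, Fin.val_last]
          rw [if_neg (by omega), if_neg (by omega), Fin.succ_last]
        have hinit : (fun i : Fin (m + 1) => dface μ α j x i.castSucc)
            = dface μ α j (fun i : Fin (m + 2) => x i.castSucc) := by
          funext i
          simp only [dface, Fin.coe_castSucc, Fin.succ_castSucc]
          try split_ifs <;> first | rfl | omega
        rw [hlast, hinit, it1]
    · -- middle-middle
      rw [Uterm, if_neg hj0, if_pos (by omega), Tterm, if_neg (by omega), if_pos (by omega),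
        Uterm, if_neg (by omega), if_pos (by omega), Tterm, if_neg hj0, if_pos (by omega)]
      exact congrArg f (dface_comm μ α hA hmult j k hj1 hjk (by omega) x)

lemma sum_range_split {M : Type*} [AddCommMonoid M] (n : ℕ) (g : ℕ → M) :
    ∑ k ∈ Finset.range (n + 3), g k
      = g 0 + (∑ k ∈ Finset.Icc 1 (n + 1), g k) + g (n + 2) := by
  have h1 : Finset.range (n + 3) = Finset.Icc 0 (n + 2) := by
    ext a; simp [Nat.lt_succ_iff]
  have h2 : Finset.Icc 0 (n + 1) = insert 0 (Finset.Icc 1 (n + 1)) := by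
    ext a; simp; omega
  rw [h1, Finset.sum_Icc_succ_top (by omega), h2, Finset.sum_insert (by simp)]

lemma pairing_sum {M : Type*} [AddCommGroup M] (N : ℕ) (U : ℕ → ℕ → M)
    (hU : ∀ j k, j ≤ k → k ≤ N → U j k = U (k + 1) j) :
    ∑ j ∈ Finset.range (N + 2), ∑ k ∈ Finset.range (N + 1), ((-1 : ℤ) ^ (j + k)) • U j k = 0 := by
  rw [← Finset.sum_product']
  rw [← Finset.sum_filter_add_sum_filter_not (Finset.range (N+2) ×ˢ Finset.range (N+1))
    (fun p => p.1 ≤ p.2)]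
  have h2 : ∑ p ∈ (Finset.range (N+2) ×ˢ Finset.range (N+1)).filter (fun p => ¬ p.1 ≤ p.2),
        ((-1 : ℤ) ^ (p.1 + p.2)) • U p.1 p.2
      = ∑ p ∈ (Finset.range (N+2) ×ˢ Finset.range (N+1)).filter (fun p => p.1 ≤ p.2),
        (-(((-1 : ℤ) ^ (p.1 + p.2)) • U p.1 p.2)) := by
    apply Finset.sum_nbij' (i := fun p : ℕ × ℕ => (p.2, p.1 - 1))
      (j := fun p : ℕ × ℕ => (p.2 + 1, p.1))
    · intro p hp
      simp only [Finset.mem_filter, Finset.mem_product, Finset.mem_range] at hp ⊢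
      omega
    · intro p hp
      simp only [Finset.mem_filter, Finset.mem_product, Finset.mem_range] at hp ⊢
      omega
    · intro p hp
      simp only [Finset.mem_filter, Finset.mem_product, Finset.mem_range] at hp
      ext <;> simp <;> omega
    · intro p hp
      simp only [Finset.mem_filter, Finset.mem_product, Finset.mem_range] at hp
      ext <;> simp
    · intro p hp
      simp only [Finset.mem_filter, Finset.mem_product, Finset.mem_range] at hp
      obtain ⟨⟨h1, h2⟩, h3⟩ := hp
      have hle : p.2 ≤ p.1 - 1 := by omega
      have := hU p.2 (p.1 - 1) hle (by omega)
      have hp1 : p.1 - 1 + 1 = p.1 := by omega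
      rw [hp1] at this
      simp only [← this]
      have : (-1 : ℤ) ^ (p.2 + (p.1 - 1)) = -(-1 : ℤ) ^ (p.1 + p.2) := by
        have : p.1 + p.2 = (p.2 + (p.1 - 1)) + 1 := by omega
        rw [this, pow_succ]; ring
      rw [this, neg_smul, neg_neg]
  rw [h2, ← Finset.sum_add_distrib]
  simp

lemma homDel_eq_sum {A A' : Type*} [AddCommGroup A'] (μ : A → A → A) (α : A → A)
    (ρl : A → A' → A') (ρr : A' → A → A') (μ' : A' → A' → A') (φ : A → A')
    (hl : ∀ a v, ρl a v = μ' (φ a) v) (hr : ∀ v a, ρr v a = μ' v (φ a))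
    (m : ℕ) (f : (Fin (m + 1) → A) → A') (y : Fin (m + 2) → A) :
    homDel μ α ρl ρr m f y
      = ∑ k ∈ Finset.range (m + 3), ((-1 : ℤ) ^ k) • Tterm μ α μ' φ m f k y := by
  rw [sum_range_split, homDel]
  congr 1
  congr 1
  · rw [pow_zero, one_smul, Tterm, if_pos rfl, hl]
  · apply Finset.sum_congr rfl
    intro k hk
    simp only [Finset.mem_Icc] at hk
    rw [Tterm, if_neg (by omega), if_pos (by omega)]
    rfl
  · rw [Tterm, if_neg (by omega), if_neg (by omega), hr]

/-- for a morphism `φ : A → A'` of multiplicative Hom-associative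
algebras, the coboundary operator on `A'`-valued cochains of `A` (with module
structure induced by `φ`) satisfies `δ^{n+1} ∘ δⁿ = 0` for all `n ≥ 1`. -/
theorem homDel_morphism_sq_zero {K A A' : Type*} [Field K]
    [AddCommGroup A] [Module K A] [AddCommGroup A'] [Module K A']
    (μ : A →ₗ[K] A →ₗ[K] A) (α : A →ₗ[K] A)
    (μ' : A' →ₗ[K] A' →ₗ[K] A') (α' : A' →ₗ[K] A')
    (hA : ∀ x y z : A, μ (α x) (μ y z) = μ (μ x y) (α z))
    (hA' : ∀ x y z : A', μ' (α' x) (μ' y z) = μ' (μ' x y) (α' z))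
    (hmult : ∀ x y : A, α (μ x y) = μ (α x) (α y))
    (hmult' : ∀ x y : A', α' (μ' x y) = μ' (α' x) (α' y))
    (φ : A →ₗ[K] A')
    (hφμ : ∀ x y : A, φ (μ x y) = μ' (φ x) (φ y))
    (hφα : ∀ x : A, φ (α x) = α' (φ x))
    (m : ℕ) (f : MultilinearMap K (fun _ : Fin (m + 1) => A) A')
    (hcompat : ∀ x : Fin (m + 1) → A, α' (f x) = f (fun i => α (x i))) :
    ∀ x : Fin (m + 3) → A,
      homDel (fun a b => μ a b) (fun a => α a)
        (fun a v => μ' (φ a) v) (fun v a => μ' v (φ a)) (m + 1)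
        (homDel (fun a b => μ a b) (fun a => α a)
          (fun a v => μ' (φ a) v) (fun v a => μ' v (φ a)) m (⇑f)) x = 0 := by
  intro x
  rw [homDel_eq_sum (fun a b => μ a b) (fun a => α a) _ _ (fun a b => μ' a b)
    (fun a => φ a) (fun _ _ => rfl) (fun _ _ => rfl) (m + 1) _ x]
  have hsumr : ∀ (s : Finset ℕ) (g : ℕ → A') (c : A'),
      μ' (∑ k ∈ s, g k) c = ∑ k ∈ s, μ' (g k) c := by
    intro s g c
    rw [map_sum, LinearMap.coe_sum, Finset.sum_apply]
  have hsmulr : ∀ (n : ℤ) (v c : A'), μ' (n • v) c = n • μ' v c := by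
    intro n v c
    rw [map_zsmul, LinearMap.smul_apply]
  have step : ∀ j ∈ Finset.range (m + 1 + 3),
      ((-1 : ℤ) ^ j) • Tterm (fun a b => μ a b) (fun a => α a) (fun a b => μ' a b)
          (fun a => φ a) (m + 1)
          (homDel (fun a b => μ a b) (fun a => α a)
            (fun a v => μ' (φ a) v) (fun v a => μ' v (φ a)) m (⇑f)) j x
        = ∑ k ∈ Finset.range (m + 3), ((-1 : ℤ) ^ (j + k)) •
            Uterm (fun a b => μ a b) (fun a => α a) (fun a b => μ' a b)
              (fun a => φ a) m (⇑f) x j k := by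
    intro j hj
    simp only [Finset.mem_range] at hj
    by_cases hj0 : j = 0
    · subst hj0
      rw [Tterm, if_pos rfl,
        homDel_eq_sum (fun a b => μ a b) (fun a => α a) _ _ (fun a b => μ' a b)
          (fun a => φ a) (fun _ _ => rfl) (fun _ _ => rfl) m (⇑f),
        map_sum, Finset.smul_sum]
      apply Finset.sum_congr rfl
      intro k _
      rw [map_zsmul, smul_smul, ← pow_add, Uterm, if_pos rfl]
    · by_cases hjtop : j = m + 3
      · subst hjtop
        rw [Tterm, if_neg (by omega), if_neg (by omega),
          homDel_eq_sum (fun a b => μ a b) (fun a => α a) _ _ (fun a b => μ' a b)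
            (fun a => φ a) (fun _ _ => rfl) (fun _ _ => rfl) m (⇑f),
          hsumr, Finset.smul_sum]
        apply Finset.sum_congr rfl
        intro k _
        rw [hsmulr, smul_smul, ← pow_add, Uterm, if_neg (by omega), if_neg (by omega)]
      · rw [Tterm, if_neg hj0, if_pos (by omega),
          homDel_eq_sum (fun a b => μ a b) (fun a => α a) _ _ (fun a b => μ' a b)
            (fun a => φ a) (fun _ _ => rfl) (fun _ _ => rfl) m (⇑f),
          Finset.smul_sum]
        apply Finset.sum_congr rfl
        intro k _
        rw [smul_smul, ← pow_add, Uterm, if_neg hj0, if_pos (by omega)]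
  rw [Finset.sum_congr rfl step]
  exact pairing_sum (m + 2)
    (fun j k => Uterm (fun a b => μ a b) (fun a => α a) (fun a b => μ' a b)
      (fun a => φ a) m (⇑f) x j k)
    (fun j k h1 h2 => Uterm_pair (fun a b => μ a b) (fun a => α a) (fun a b => μ' a b)
      (fun a => α' a) (fun a => φ a) hA hA' hmult hφμ hφα m (⇑f) hcompat x j k h1 h2)
end

section
/- Let φ : A → B be a morphism of multiplicative Hom-associative algebras. Define the morphism cochain complex Cⁿ(φ,φ) = Cⁿ(A,A) × Cⁿ(B,B) × C^{n−1}(A,B) with coboundary δⁿ(φ₁, φ₂, φ₃) = (δⁿφ₁, δⁿφ₂, φ ∘ φ₁ − φ₂ ∘ φ^⊗n − δ^{n−1}φ₃), where the first two components use the Hom-Hochschild differentials on A and B and the third uses the differential with coefficients in the φ-induced A-bimodule B. Then δ^{n+1} ∘ δⁿ = 0. -/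
namespace HomDelAux

variable {A M : Type*} [AddCommGroup M]

def face (μ : A → A → A) (α : A → A) (ρl : A → M → M) (ρr : M → A → M)
    (n : ℕ) (f : (Fin (n + 1) → A) → M) (k : ℕ) : (Fin (n + 2) → A) → M := fun x =>
  if k = 0 then ρl (α^[n] (x 0)) (f (fun i => x i.succ))
  else if k ≤ n + 1 then
    f (fun i : Fin (n + 1) =>
        if (i : ℕ) + 1 < k then α (x i.castSucc)
        else if (i : ℕ) + 1 = k then μ (x i.castSucc) (x i.succ)
        else α (x i.succ))
  else ρr (f (fun i => x i.castSucc)) (α^[n] (x (Fin.last (n + 1))))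

variable (μ : A → A → A) (α : A → A) (ρl : A → M → M) (ρr : M → A → M)

theorem face_zero (n : ℕ) (f : (Fin (n + 1) → A) → M) (x : Fin (n + 2) → A) :
    face μ α ρl ρr n f 0 x = ρl (α^[n] (x 0)) (f (fun i => x i.succ)) := by
  simp [face]

theorem face_mid {n k : ℕ} (hk1 : k ≠ 0) (hk2 : k ≤ n + 1) (f : (Fin (n + 1) → A) → M)
    (x : Fin (n + 2) → A) :
    face μ α ρl ρr n f k x = f (fun i : Fin (n + 1) =>
        if (i : ℕ) + 1 < k then α (x i.castSucc)
        else if (i : ℕ) + 1 = k then μ (x i.castSucc) (x i.succ)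
        else α (x i.succ)) := by
  simp only [face, if_neg hk1, if_pos hk2]

theorem face_last {n k : ℕ} (hk : n + 1 < k) (f : (Fin (n + 1) → A) → M)
    (x : Fin (n + 2) → A) :
    face μ α ρl ρr n f k x
      = ρr (f (fun i => x i.castSucc)) (α^[n] (x (Fin.last (n + 1)))) := by
  simp only [face, if_neg (by omega : ¬ k = 0), if_neg (by omega : ¬ k ≤ n + 1)]

theorem iter_mul (hmult : ∀ a b, α (μ a b) = μ (α a) (α b)) :
    ∀ (n : ℕ) (a b : A), α^[n] (μ a b) = μ (α^[n] a) (α^[n] b) := by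
  intro n
  induction n with
  | zero => simp
  | succ n ih =>
    intro a b
    rw [Function.iterate_succ_apply', ih, hmult, Function.iterate_succ_apply',
      Function.iterate_succ_apply']

section Key

variable (σ : M → M)
  (hA : ∀ a b c, μ (α a) (μ b c) = μ (μ a b) (α c))
  (hmult : ∀ a b, α (μ a b) = μ (α a) (α b))
  (L1 : ∀ a b v, ρl (α a) (ρl b v) = ρl (μ a b) (σ v))
  (L2 : ∀ a v b, ρl (α a) (ρr v b) = ρr (ρl a v) (α b))
  (L3 : ∀ v a b, ρr (σ v) (μ a b) = ρr (ρr v a) (α b))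
  {n : ℕ} (f : (Fin (n + 1) → A) → M)
  (hf : ∀ y, σ (f y) = f (fun i => α (y i)))

set_option maxHeartbeats 1000000 in
include hA hmult L1 L2 L3 hf in
theorem face_face (j k : ℕ) (hjk : j ≤ k) (hk : k ≤ n + 2) (x : Fin (n + 3) → A) :
    face μ α ρl ρr (n + 1) (face μ α ρl ρr n f j) (k + 1) x
      = face μ α ρl ρr (n + 1) (face μ α ρl ρr n f k) j x := by
  by_cases hj0 : j = 0
  · subst hj0
    by_cases hk0 : k = 0
    · -- case 1 : j = 0, k = 0
      subst hk0
      rw [face_mid μ α ρl ρr (by omega) (by omega), face_zero, face_zero, face_zero,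
        Function.iterate_succ_apply', L1, hf, ← iter_mul μ α hmult]
      simp only [Fin.val_succ, Fin.val_zero, Fin.castSucc_zero]
      norm_num
    · by_cases hkt : k = n + 2
      · -- case 3 : j = 0, k = n + 2
        subst hkt
        rw [face_last μ α ρl ρr (by omega), face_zero, face_zero,
          face_last μ α ρl ρr (by omega)]
        conv_rhs => rw [Function.iterate_succ_apply', L2]
        conv_lhs => rw [Function.iterate_succ_apply']
        rw [Fin.succ_last]
        simp only [Fin.castSucc_zero, Fin.succ_castSucc]
      · -- case 2 : j = 0, 1 ≤ k ≤ n + 1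
        rw [face_mid μ α ρl ρr (by omega) (by omega), face_zero, face_zero,
          face_mid μ α ρl ρr (k := k) (by omega) (by omega)]
        congr 1
        · simp only [Fin.val_zero]
          simp only [show (0:ℕ) + 1 < k + 1 by omega, if_true]
          simp [Function.iterate_succ_apply]
        · congr 1
          funext i
          simp only [Fin.val_succ, Fin.succ_castSucc]
          split_ifs <;> first | rfl | omega
  · by_cases hkt : k = n + 2
    · subst hkt
      by_cases hjt : j = n + 2
      · -- case 7 : j = k = n + 2
        subst hjt
        rw [face_last μ α ρl ρr (by omega), face_last μ α ρl ρr (by omega),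
          face_mid μ α ρl ρr (by omega) (by omega), face_last μ α ρl ρr (by omega),
          Function.iterate_succ_apply', ← L3, hf, ← iter_mul μ α hmult]
        simp only [Fin.val_last]
        rw [if_neg (by omega : ¬ (n + 1 + 1 < n + 2)), if_pos trivial, Fin.succ_last]
        congr 1
        congr 1
        funext i
        simp only [Fin.coe_castSucc]
        rw [if_pos (Nat.add_lt_add_right i.isLt 1)]
      · -- case 6 : 1 ≤ j ≤ n + 1, k = n + 2
        rw [face_last μ α ρl ρr (by omega), face_mid μ α ρl ρr (by omega) (by omega),
          face_mid μ α ρl ρr hj0 (by omega), face_last μ α ρl ρr (by omega)]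
        simp only [Fin.val_last]
        rw [if_neg (by omega : ¬ (n + 1 + 1 < j)), if_neg (by omega : ¬ (n + 1 + 1 = j)),
          Fin.succ_last]
        conv_lhs => rw [Function.iterate_succ_apply]
        congr 1
    · -- 1 ≤ j ≤ k ≤ n + 1 : cases 4 and 5 together
      rw [face_mid μ α ρl ρr (by omega) (by omega), face_mid μ α ρl ρr hj0 (by omega),
        face_mid μ α ρl ρr hj0 (by omega), face_mid μ α ρl ρr (by omega : k ≠ 0) (by omega)]
      congr 1
      funext i
      simp only [Fin.val_succ, Fin.coe_castSucc, Fin.succ_castSucc]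
      rcases eq_or_lt_of_le hjk with rfl | hlt
      · -- j = k : uses hA
        split_ifs <;> first | rfl | omega | (rw [hA]) | (rw [← hA])
      · -- j < k : uses hmult
        split_ifs <;> first | rfl | omega | (rw [hmult]) | (rw [← hmult])

end Key
end HomDelAux

namespace HomDelAux
section Sq

variable {A M : Type*} [AddCommGroup M]
variable (μ : A → A → A) (α : A → A) (ρl : A → M → M) (ρr : M → A → M) (σ : M → M)
  (hA : ∀ a b c, μ (α a) (μ b c) = μ (μ a b) (α c))
  (hmult : ∀ a b, α (μ a b) = μ (α a) (α b))
  (L1 : ∀ a b v, ρl (α a) (ρl b v) = ρl (μ a b) (σ v))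
  (L2 : ∀ a v b, ρl (α a) (ρr v b) = ρr (ρl a v) (α b))
  (L3 : ∀ v a b, ρr (σ v) (μ a b) = ρr (ρr v a) (α b))
  (hρl : ∀ a v w, ρl a (v + w) = ρl a v + ρl a w)
  (hρr : ∀ v w a, ρr (v + w) a = ρr v a + ρr w a)
  {n : ℕ} (f : (Fin (n + 1) → A) → M)
  (hf : ∀ y, σ (f y) = f (fun i => α (y i)))

theorem homDel_eq_sum (g : (Fin (n + 1) → A) → M) (x : Fin (n + 2) → A) :
    homDel μ α ρl ρr n g x
      = ∑ k ∈ Finset.range (n + 3), ((-1 : ℤ) ^ k) • face μ α ρl ρr n g k x := by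
  rw [Finset.sum_range_succ, ← Nat.Ico_zero_eq_range, Finset.sum_eq_sum_Ico_succ_bot (by omega)]
  have h3 : ∀ k ∈ Finset.Ico 1 (n + 2), ((-1 : ℤ) ^ k) • face μ α ρl ρr n g k x
      = ((-1 : ℤ) ^ k) • g (fun i : Fin (n + 1) =>
        if (i : ℕ) + 1 < k then α (x i.castSucc)
        else if (i : ℕ) + 1 = k then μ (x i.castSucc) (x i.succ)
        else α (x i.succ)) := by
    intro k hk
    simp only [Finset.mem_Ico] at hk
    rw [face_mid μ α ρl ρr (by omega) (by omega)]
  rw [Finset.sum_congr rfl h3, face_zero, face_last μ α ρl ρr (by omega), homDel]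
  rw [show Finset.Icc 1 (n+1) = Finset.Ico 1 (n+2) by rfl]
  ring_nf
  abel

include hρl hρr in
theorem face_homDel (j : ℕ) (x : Fin (n + 3) → A) :
    face μ α ρl ρr (n + 1) (homDel μ α ρl ρr n f) j x
      = ∑ k ∈ Finset.range (n + 3),
          ((-1 : ℤ) ^ k) • face μ α ρl ρr (n + 1) (face μ α ρl ρr n f k) j x := by
  by_cases hj0 : j = 0
  · subst hj0
    rw [face_zero, homDel_eq_sum μ α ρl ρr]
    have hl : ∀ a : A, ∀ s : Finset ℕ, ∀ v : ℕ → M,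
        ρl a (∑ k ∈ s, v k) = ∑ k ∈ s, ρl a (v k) := fun a s v =>
      map_sum (AddMonoidHom.mk' (ρl a) (hρl a)) v s
    have hls : ∀ (a : A) (c : ℤ) (v : M), ρl a (c • v) = c • ρl a v := fun a c v =>
      AddMonoidHom.map_zsmul (AddMonoidHom.mk' (ρl a) (hρl a)) c v
    rw [hl]
    refine Finset.sum_congr rfl fun k _ => ?_
    rw [hls, face_zero]
  · by_cases hjt : j ≤ n + 2
    · rw [face_mid μ α ρl ρr hj0 hjt, homDel_eq_sum μ α ρl ρr]
      refine Finset.sum_congr rfl fun k _ => ?_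
      rw [face_mid μ α ρl ρr hj0 hjt]
    · rw [face_last μ α ρl ρr (n := n + 1) (by omega), homDel_eq_sum μ α ρl ρr]
      have hr : ∀ a : A, ∀ s : Finset ℕ, ∀ v : ℕ → M,
          ρr (∑ k ∈ s, v k) a = ∑ k ∈ s, ρr (v k) a := fun a s v =>
        map_sum (AddMonoidHom.mk' (fun w => ρr w a) (fun v w => hρr v w a)) v s
      have hrs : ∀ (a : A) (c : ℤ) (v : M), ρr (c • v) a = c • ρr v a := fun a c v =>
        AddMonoidHom.map_zsmul (AddMonoidHom.mk' (fun w => ρr w a) (fun v w => hρr v w a)) c v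
      rw [hr]
      refine Finset.sum_congr rfl fun k _ => ?_
      rw [hrs, face_last μ α ρl ρr (n := n + 1) (by omega)]
set_option maxHeartbeats 1000000 in
include hA hmult L1 L2 L3 hρl hρr hf in
theorem homDel_homDel (x : Fin (n + 3) → A) :
    homDel μ α ρl ρr (n + 1) (homDel μ α ρl ρr n f) x = 0 := by
  rw [homDel_eq_sum μ α ρl ρr]
  have h1 : ∀ j ∈ Finset.range (n + 4),
      ((-1 : ℤ) ^ j) • face μ α ρl ρr (n + 1) (homDel μ α ρl ρr n f) j x
        = ∑ k ∈ Finset.range (n + 3),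
            ((-1 : ℤ) ^ (j + k)) • face μ α ρl ρr (n + 1) (face μ α ρl ρr n f k) j x := by
    intro j _
    rw [face_homDel μ α ρl ρr hρl hρr, Finset.smul_sum]
    exact Finset.sum_congr rfl fun k _ => by rw [smul_smul, ← pow_add]
  rw [Finset.sum_congr rfl h1, ← Finset.sum_product']
  apply Finset.sum_involution
    (g := fun p _ => if p.1 ≤ p.2 then (p.2 + 1, p.1) else (p.2, p.1 - 1))
  · rintro ⟨a, b⟩ hp
    simp only [Finset.mem_product, Finset.mem_range] at hp
    dsimp only
    by_cases hle : a ≤ b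
    · rw [if_pos hle]
      have key := face_face μ α ρl ρr σ hA hmult L1 L2 L3 f hf a b hle (by omega) x
      dsimp only
      rw [key]
      have hs : ((-1 : ℤ)) ^ (b + 1 + a) = -(-1 : ℤ) ^ (a + b) := by
        rw [show b + 1 + a = (a + b) + 1 by omega, pow_succ]; ring
      rw [hs, neg_smul, add_neg_cancel]
    · rw [if_neg hle]
      have key := face_face μ α ρl ρr σ hA hmult L1 L2 L3 f hf b (a - 1)
        (by omega) (by omega) x
      rw [show a - 1 + 1 = a by omega] at key
      dsimp only
      rw [key]
      have hs : ((-1 : ℤ)) ^ (a + b) = -(-1 : ℤ) ^ (b + (a - 1)) := by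
        rw [show a + b = (b + (a - 1)) + 1 by omega, pow_succ]; ring
      rw [hs, neg_smul, neg_add_cancel]
  · rintro ⟨a, b⟩ hp _
    dsimp only
    by_cases hle : a ≤ b
    · rw [if_pos hle]
      simp only [ne_eq, Prod.mk.injEq, not_and]
      omega
    · rw [if_neg hle]
      simp only [ne_eq, Prod.mk.injEq, not_and]
      omega
  · rintro ⟨a, b⟩ hp
    simp only [Finset.mem_product, Finset.mem_range] at hp
    dsimp only
    by_cases hle : a ≤ b
    · rw [if_pos hle]
      dsimp only
      rw [if_neg (by omega : ¬ b + 1 ≤ a)]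
      simp only [Prod.mk.injEq, true_and, and_true]
      omega
    · rw [if_neg hle]
      dsimp only
      rw [if_pos (by omega : b ≤ a - 1)]
      simp only [Prod.mk.injEq, true_and, and_true]
      omega
  · rintro ⟨a, b⟩ hp
    simp only [Finset.mem_product, Finset.mem_range] at hp
    dsimp only
    by_cases hle : a ≤ b
    · rw [if_pos hle]
      simp only [Finset.mem_product, Finset.mem_range]
      refine ⟨by omega, by omega⟩
    · rw [if_neg hle]
      simp only [Finset.mem_product, Finset.mem_range]
      refine ⟨by omega, by omega⟩

end Sq
end HomDelAux

namespace HomDelAux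

theorem homDel_sub {A M : Type*} [AddCommGroup M] (μ : A → A → A) (α : A → A)
    (ρl : A → M → M) (ρr : M → A → M)
    (hρl : ∀ a v w, ρl a (v - w) = ρl a v - ρl a w)
    (hρr : ∀ v w a, ρr (v - w) a = ρr v a - ρr w a)
    (m : ℕ) (g h : (Fin (m + 1) → A) → M) (x : Fin (m + 2) → A) :
    homDel μ α ρl ρr m (fun y => g y - h y) x
      = homDel μ α ρl ρr m g x - homDel μ α ρl ρr m h x := by
  simp only [homDel, hρl, hρr, smul_sub, Finset.sum_sub_distrib]
  abel

section Plumb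

variable {K A B : Type*} [Field K] [AddCommGroup A] [Module K A] [AddCommGroup B] [Module K B]
  (μ : A →ₗ[K] A →ₗ[K] A) (α : A →ₗ[K] A) (μ' : B →ₗ[K] B →ₗ[K] B) (β : B →ₗ[K] B)
  (φ : A →ₗ[K] B)
  (hφμ : ∀ x y : A, φ (μ x y) = μ' (φ x) (φ y))
  (hφα : ∀ x : A, φ (α x) = β (φ x))

include hφα in
theorem iter_comm : ∀ (k : ℕ) (a : A), φ (α^[k] a) = β^[k] (φ a) := by
  intro k
  induction k with
  | zero => intro a; rfl
  | succ k ih =>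
    intro a
    rw [Function.iterate_succ_apply', Function.iterate_succ_apply', hφα, ih]

include hφμ in
theorem map_homDel (m : ℕ) (f : (Fin (m + 1) → A) → A) (x : Fin (m + 2) → A) :
    φ (homDel (fun a b => μ a b) (fun a => α a) (fun a v => μ a v) (fun v a => μ v a) m f x)
      = homDel (fun a b => μ a b) (fun a => α a) (fun a v => μ' (φ a) v)
          (fun v a => μ' v (φ a)) m (fun y => φ (f y)) x := by
  simp only [homDel, map_add, map_sum, map_zsmul, hφμ]

include hφμ hφα in
theorem comp_homDel (m : ℕ) (g : (Fin (m + 1) → B) → B) (x : Fin (m + 2) → A) :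
    homDel (fun a b => μ' a b) (fun a => β a) (fun a v => μ' a v) (fun v a => μ' v a) m g
        (fun i => φ (x i))
      = homDel (fun a b => μ a b) (fun a => α a) (fun a v => μ' (φ a) v)
          (fun v a => μ' v (φ a)) m (fun y => g (fun i => φ (y i))) x := by
  simp only [homDel]
  congr 1
  · congr 1
    · rw [← iter_comm α β φ hφα]
    · refine Finset.sum_congr rfl fun k _ =>
        congrArg (fun z => ((-1 : ℤ) ^ k) • z) (congrArg g (funext fun i => ?_))
      split_ifs <;> simp [hφα, hφμ]
  · rw [← iter_comm α β φ hφα]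

end Plumb
end HomDelAux

/-- for a morphism `φ : A → B` of multiplicative Hom-associative
algebras, the coboundary `δⁿ(φ₁,φ₂,φ₃) = (δⁿφ₁, δⁿφ₂, φ∘φ₁ - φ₂∘φ^⊗n - δ^{n-1}φ₃)`
of the morphism cochain complex satisfies `δ^{n+1} ∘ δⁿ = 0` (all three components
of the composite vanish). -/
theorem morphism_complex_sq_zero {K A B : Type*} [Field K]
    [AddCommGroup A] [Module K A] [AddCommGroup B] [Module K B]
    (μ : A →ₗ[K] A →ₗ[K] A) (α : A →ₗ[K] A)
    (μ' : B →ₗ[K] B →ₗ[K] B) (β : B →ₗ[K] B)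
    (hA : ∀ x y z : A, μ (α x) (μ y z) = μ (μ x y) (α z))
    (hB : ∀ x y z : B, μ' (β x) (μ' y z) = μ' (μ' x y) (β z))
    (hmultA : ∀ x y : A, α (μ x y) = μ (α x) (α y))
    (hmultB : ∀ x y : B, β (μ' x y) = μ' (β x) (β y))
    (φ : A →ₗ[K] B)
    (hφμ : ∀ x y : A, φ (μ x y) = μ' (φ x) (φ y))
    (hφα : ∀ x : A, φ (α x) = β (φ x))
    (m : ℕ)
    (f₁ : MultilinearMap K (fun _ : Fin (m + 2) => A) A)
    (f₂ : MultilinearMap K (fun _ : Fin (m + 2) => B) B)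
    (f₃ : MultilinearMap K (fun _ : Fin (m + 1) => A) B)
    (hc₁ : ∀ x : Fin (m + 2) → A, α (f₁ x) = f₁ (fun i => α (x i)))
    (hc₂ : ∀ x : Fin (m + 2) → B, β (f₂ x) = f₂ (fun i => β (x i)))
    (hc₃ : ∀ x : Fin (m + 1) → A, β (f₃ x) = f₃ (fun i => α (x i))) :
    (∀ x : Fin (m + 4) → A,
      homDel (fun a b => μ a b) (fun a => α a) (fun a v => μ a v) (fun v a => μ v a)
        (m + 2)
        (homDel (fun a b => μ a b) (fun a => α a) (fun a v => μ a v) (fun v a => μ v a)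
          (m + 1) (⇑f₁)) x = 0) ∧
    (∀ x : Fin (m + 4) → B,
      homDel (fun a b => μ' a b) (fun a => β a) (fun a v => μ' a v) (fun v a => μ' v a)
        (m + 2)
        (homDel (fun a b => μ' a b) (fun a => β a) (fun a v => μ' a v) (fun v a => μ' v a)
          (m + 1) (⇑f₂)) x = 0) ∧
    (∀ x : Fin (m + 3) → A,
      φ (homDel (fun a b => μ a b) (fun a => α a) (fun a v => μ a v) (fun v a => μ v a)
          (m + 1) (⇑f₁) x)
        - homDel (fun a b => μ' a b) (fun a => β a) (fun a v => μ' a v) (fun v a => μ' v a)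
            (m + 1) (⇑f₂) (fun i => φ (x i))
        - homDel (fun a b => μ a b) (fun a => α a)
            (fun a v => μ' (φ a) v) (fun v a => μ' v (φ a)) (m + 1)
            (fun y => φ (f₁ y) - f₂ (fun i => φ (y i))
              - homDel (fun a b => μ a b) (fun a => α a)
                  (fun a v => μ' (φ a) v) (fun v a => μ' v (φ a)) m (⇑f₃) y) x
        = 0) := by
  refine ⟨fun x => ?_, fun x => ?_, fun x => ?_⟩
  · exact HomDelAux.homDel_homDel (μ := fun a b => μ a b) (α := fun a => α a)
      (ρl := fun a v => μ a v) (ρr := fun v a => μ v a) (σ := fun a => α a)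
      (hA := hA) (hmult := hmultA) (L1 := hA) (L2 := hA) (L3 := hA)
      (hρl := fun a v w => map_add (μ a) v w)
      (hρr := fun v w a => by simp)
      (f := ⇑f₁) (hf := hc₁) x
  · exact HomDelAux.homDel_homDel (μ := fun a b => μ' a b) (α := fun a => β a)
      (ρl := fun a v => μ' a v) (ρr := fun v a => μ' v a) (σ := fun a => β a)
      (hA := hB) (hmult := hmultB) (L1 := hB) (L2 := hB) (L3 := hB)
      (hρl := fun a v w => map_add (μ' a) v w)
      (hρr := fun v w a => by simp)
      (f := ⇑f₂) (hf := hc₂) x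
  · have hρl3 : ∀ (a : A) (v w : B), μ' (φ a) (v - w) = μ' (φ a) v - μ' (φ a) w :=
      fun a v w => map_sub (μ' (φ a)) v w
    have hρr3 : ∀ (v w : B) (a : A), μ' (v - w) (φ a) = μ' v (φ a) - μ' w (φ a) :=
      fun v w a => by simp
    have e1 := HomDelAux.map_homDel μ α μ' φ hφμ (m + 1) ⇑f₁ x
    have e2 := HomDelAux.comp_homDel μ α μ' β φ hφμ hφα (m + 1) ⇑f₂ x
    have e3 : homDel (fun a b => μ a b) (fun a => α a)
          (fun a v => μ' (φ a) v) (fun v a => μ' v (φ a)) (m + 1)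
          (fun y => φ (f₁ y) - f₂ (fun i => φ (y i))
            - homDel (fun a b => μ a b) (fun a => α a)
                (fun a v => μ' (φ a) v) (fun v a => μ' v (φ a)) m (⇑f₃) y) x
        = homDel (fun a b => μ a b) (fun a => α a)
            (fun a v => μ' (φ a) v) (fun v a => μ' v (φ a)) (m + 1)
            (fun y => φ (f₁ y) - f₂ (fun i => φ (y i))) x
          - homDel (fun a b => μ a b) (fun a => α a)
              (fun a v => μ' (φ a) v) (fun v a => μ' v (φ a)) (m + 1)
              (homDel (fun a b => μ a b) (fun a => α a)
                (fun a v => μ' (φ a) v) (fun v a => μ' v (φ a)) m (⇑f₃)) x :=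
      HomDelAux.homDel_sub _ _ _ _ hρl3 hρr3 (m + 1)
        (fun y => φ (f₁ y) - f₂ (fun i => φ (y i)))
        (homDel (fun a b => μ a b) (fun a => α a)
          (fun a v => μ' (φ a) v) (fun v a => μ' v (φ a)) m (⇑f₃)) x
    have e4 : homDel (fun a b => μ a b) (fun a => α a)
          (fun a v => μ' (φ a) v) (fun v a => μ' v (φ a)) (m + 1)
          (fun y => φ (f₁ y) - f₂ (fun i => φ (y i))) x
        = homDel (fun a b => μ a b) (fun a => α a)
            (fun a v => μ' (φ a) v) (fun v a => μ' v (φ a)) (m + 1)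
            (fun y => φ (f₁ y)) x
          - homDel (fun a b => μ a b) (fun a => α a)
              (fun a v => μ' (φ a) v) (fun v a => μ' v (φ a)) (m + 1)
              (fun y => f₂ (fun i => φ (y i))) x :=
      HomDelAux.homDel_sub _ _ _ _ hρl3 hρr3 (m + 1)
        (fun y => φ (f₁ y)) (fun y => f₂ (fun i => φ (y i))) x
    have e5 : homDel (fun a b => μ a b) (fun a => α a)
          (fun a v => μ' (φ a) v) (fun v a => μ' v (φ a)) (m + 1)
          (homDel (fun a b => μ a b) (fun a => α a)
            (fun a v => μ' (φ a) v) (fun v a => μ' v (φ a)) m (⇑f₃)) x = 0 :=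
      HomDelAux.homDel_homDel (μ := fun a b => μ a b) (α := fun a => α a)
        (ρl := fun a v => μ' (φ a) v) (ρr := fun v a => μ' v (φ a)) (σ := fun b => β b)
        (hA := hA) (hmult := hmultA)
        (L1 := fun a b v => by
          show μ' (φ (α a)) (μ' (φ b) v) = μ' (φ (μ a b)) (β v)
          rw [hφα, hφμ, hB])
        (L2 := fun a v b => by
          show μ' (φ (α a)) (μ' v (φ b)) = μ' (μ' (φ a) v) (φ (α b))
          rw [hφα, hφα, hB])
        (L3 := fun v a b => by
          show μ' (β v) (φ (μ a b)) = μ' (μ' v (φ a)) (φ (α b))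
          rw [hφμ, hφα, hB])
        (hρl := fun a v w => map_add (μ' (φ a)) v w)
        (hρr := fun v w a => by simp)
        (f := ⇑f₃) (hf := hc₃) x
    rw [e1, e2, e3, e4, e5]
    abel
end

section
/- Let φ : A → B be a morphism of multiplicative Hom-associative algebras and φ₂ : B^n → B an n-cochain with β∘φ₂ = φ₂∘β^⊗n. Then (δⁿφ₂) ∘ φ^⊗(n+1) = δⁿ(φ₂ ∘ φ^⊗n), where on the left δⁿ is the Hom-Hochschild differential of B with values in B and on the right δⁿ is the differential of A with values in the φ-induced A-bimodule B. -/
/-- for a morphism `φ : A → B` of multiplicative Hom-associative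
algebras and a compatible `n`-cochain `φ₂` of `B`, one has
`(δⁿφ₂) ∘ φ^⊗(n+1) = δⁿ(φ₂ ∘ φ^⊗n)`, where the left differential is the
Hochschild differential of `B` and the right one is valued in the `φ`-induced
`A`-bimodule `B`. -/
theorem homDel_comp_phi {K A B : Type*} [Field K]
    [AddCommGroup A] [Module K A] [AddCommGroup B] [Module K B]
    (μ : A →ₗ[K] A →ₗ[K] A) (α : A →ₗ[K] A)
    (μ' : B →ₗ[K] B →ₗ[K] B) (β : B →ₗ[K] B)
    (hA : ∀ x y z : A, μ (α x) (μ y z) = μ (μ x y) (α z))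
    (hB : ∀ x y z : B, μ' (β x) (μ' y z) = μ' (μ' x y) (β z))
    (hmultA : ∀ x y : A, α (μ x y) = μ (α x) (α y))
    (hmultB : ∀ x y : B, β (μ' x y) = μ' (β x) (β y))
    (φ : A →ₗ[K] B)
    (hφμ : ∀ x y : A, φ (μ x y) = μ' (φ x) (φ y))
    (hφα : ∀ x : A, φ (α x) = β (φ x))
    (m : ℕ) (f₂ : MultilinearMap K (fun _ : Fin (m + 1) => B) B)
    (hc₂ : ∀ x : Fin (m + 1) → B, β (f₂ x) = f₂ (fun i => β (x i))) :
    ∀ x : Fin (m + 2) → A,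
      homDel (fun a b => μ' a b) (fun a => β a) (fun a v => μ' a v) (fun v a => μ' v a)
          m (⇑f₂) (fun i => φ (x i))
        = homDel (fun a b => μ a b) (fun a => α a)
            (fun a v => μ' (φ a) v) (fun v a => μ' v (φ a)) m
            (fun y => f₂ (fun i => φ (y i))) x := by
  have hiter : ∀ (n : ℕ) (a : A), φ ((fun a => α a)^[n] a) = (fun b => β b)^[n] (φ a) := by
    intro n
    induction n with
    | zero => intro a; rfl
    | succ n ih =>
      intro a
      rw [Function.iterate_succ_apply, Function.iterate_succ_apply, ih, hφα]
  intro x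
  unfold homDel
  beta_reduce
  congr 1
  · congr 1
    · rw [← hiter]
    · congr 1
      funext k
      congr 1
      congr 1
      funext i
      beta_reduce
      split
      · rw [← hφα]
      · split
        · rw [← hφμ]
        · rw [← hφα]
  · rw [← hiter]
end
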